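/- Let C₁ > 0 be a constant such that ‖v‖_{L⁴(Ω)} ≤ C₁ ‖curl v‖_{L²(Ω)} for every smooth vector field v on Ω̄ with div v = 0 in Ω and v·n = 0 on ∂Ω. Let (u₁, p₁, h₁) and (u₂, p₂, h₂) be classical solutions of the 2D Navier–Stokes system on Ω×(0,T) with data (u₀₁, L₁) and (u₀₂, L₂), and set ωᵢ := curl uᵢ. Then for every t ∈ (0,T), d/dt ∫_Ω (ω₁ − ω₂)²(x,t) dx + ∫_Ω |∇(ω₁ − ω₂)(x,t)|² dx ≤ C₁² ‖ω₂(·,t)‖²_{L⁴(Ω)} · ∫_Ω (ω₁ − ω₂)²(x,t) dx. -/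

import Mathlib

noncomputable section
open MeasureTheory Real

/-- Points of the plane `ℝ²`. -/
abbrev Pt : Type := EuclideanSpace ℝ (Fin 2)

/-- Spatial partial derivative `∂ᵢ f` of a scalar field. -/
def pd (i : Fin 2) (f : Pt → ℝ) (x : Pt) : ℝ :=
  fderiv ℝ f x (EuclideanSpace.single i 1)

/-- Scalar vorticity `curl v = ∂₁v₂ - ∂₂v₁` of a planar vector field. -/
def vort (v : Pt → Pt) (x : Pt) : ℝ :=
  pd 0 (fun y => v y 1) x - pd 1 (fun y => v y 0) x

/-- Divergence `div v = ∂₁v₁ + ∂₂v₂`. -/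
def div2 (v : Pt → Pt) (x : Pt) : ℝ :=
  pd 0 (fun y => v y 0) x + pd 1 (fun y => v y 1) x

/-- Convection term `(v·∇)v`, component `i`. -/
def conv (v : Pt → Pt) (x : Pt) (i : Fin 2) : ℝ :=
  ∑ j, v x j * pd j (fun y => v y i) x

/-- Squared pointwise norm `|v(x)|²` of a planar vector field. -/
def vecSq (v : Pt → Pt) (x : Pt) : ℝ := ∑ i, v x i ^ 2

/-- Squared pointwise norm `|∇f(x)|²` of the gradient of a scalar field. -/
def gradSq (f : Pt → ℝ) (x : Pt) : ℝ := ∑ i, pd i f x ^ 2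

/-- Squared pointwise norm `|∇v(x)|²` of the gradient of a vector field. -/
def gradVecSq (v : Pt → Pt) (x : Pt) : ℝ :=
  ∑ i, ∑ j, pd j (fun y => v y i) x ^ 2

/-- Squared pointwise norm `|∇²v(x)|²` of the Hessian of a vector field. -/
def hessVecSq (v : Pt → Pt) (x : Pt) : ℝ :=
  ∑ i, ∑ j, ∑ k, pd k (fun y => pd j (fun z => v z i) y) x ^ 2

/-- `L²(Ω)` norm of a scalar field. -/
def L2 (Ω : Set Pt) (f : Pt → ℝ) : ℝ := (∫ x in Ω, f x ^ 2) ^ (1/2 : ℝ)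

/-- `L⁴(Ω)` norm of a scalar field. -/
def L4 (Ω : Set Pt) (f : Pt → ℝ) : ℝ := (∫ x in Ω, f x ^ 4) ^ (1/4 : ℝ)

/-- `H¹(Ω)` norm of a vector field:  `(∫_Ω (|v|² + |∇v|²))^{1/2}`. -/
def H1vec (Ω : Set Pt) (v : Pt → Pt) : ℝ :=
  (∫ x in Ω, (vecSq v x + gradVecSq v x)) ^ (1/2 : ℝ)

/-- Squared `H²(Ω)` norm of a vector field: `∫_Ω (|v|² + |∇v|² + |∇²v|²)`. -/
def H2vecSq (Ω : Set Pt) (v : Pt → Pt) : ℝ :=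
  ∫ x in Ω, (vecSq v x + gradVecSq v x + hessVecSq v x)

/-- `H¹(Ω)` norm of a scalar field: `(∫_Ω (f² + |∇f|²))^{1/2}`. -/
def H1scalar (Ω : Set Pt) (f : Pt → ℝ) : ℝ :=
  (∫ x in Ω, (f x ^ 2 + gradSq f x)) ^ (1/2 : ℝ)

/-- A bounded, simply connected planar domain with smooth boundary, encoded by its
outward unit normal `n` and boundary surface measure `σ` satisfying the divergence
theorem (Gauss–Green formula) for smooth vector fields. -/
structure SmoothDomain2 where
  Ω : Set Pt
  n : Pt → Pt
  σ : Measure Pt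
  isOpen : IsOpen Ω
  bounded : Bornology.IsBounded Ω
  nonempty : Ω.Nonempty
  simplyConnected : SimplyConnectedSpace Ω
  divergence_thm : ∀ F : Pt → Pt, ContDiff ℝ (⊤ : ℕ∞) F →
    (∫ x in Ω, div2 F x) = ∫ x in frontier Ω, (∑ j, F x j * n x j) ∂σ

/-- `(u, p, h)` is a classical solution of the 2D Navier–Stokes system on `Ω × (0,T)`
with data `(u₀, L)`: all functions are smooth (up to the boundary, being globally
smooth), the momentum equation and incompressibility hold in `Ω × (0,T)`, the slip
and vorticity boundary conditions hold on `∂Ω × (0,T)`, `u(·,0) = u₀`, and the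
global vorticity invariant constraint `(1/|Ω|)∫_Ω ω dx = L` holds on `(0,T)`. -/
structure IsNSSol (D : SmoothDomain2) (T : ℝ) (u₀ : Pt → Pt) (L : ℝ)
    (u : ℝ → Pt → Pt) (p : ℝ → Pt → ℝ) (h : ℝ → ℝ) : Prop where
  smooth_u : ContDiff ℝ (⊤ : ℕ∞) (fun q : ℝ × Pt => u q.1 q.2)
  smooth_p : ContDiff ℝ (⊤ : ℕ∞) (fun q : ℝ × Pt => p q.1 q.2)
  smooth_h : ContDiff ℝ (⊤ : ℕ∞) h
  momentum : ∀ t ∈ Set.Ioo (0:ℝ) T, ∀ x ∈ D.Ω, ∀ i : Fin 2,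
    deriv (fun s => u s x i) t + conv (u t) x i + pd i (p t) x
      - (∑ j, pd j (fun y => pd j (fun z => u t z i) y) x) = 0
  divFree : ∀ t ∈ Set.Ioo (0:ℝ) T, ∀ x ∈ D.Ω, div2 (u t) x = 0
  slip : ∀ t ∈ Set.Ioo (0:ℝ) T, ∀ x ∈ frontier D.Ω,
    (∑ j, u t x j * D.n x j) = 0
  vortBC : ∀ t ∈ Set.Ioo (0:ℝ) T, ∀ x ∈ frontier D.Ω, vort (u t) x = h t
  init : ∀ x ∈ D.Ω, u 0 x = u₀ x
  vortAvg : ∀ t ∈ Set.Ioo (0:ℝ) T,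
    (1 / (volume D.Ω).toReal) * (∫ x in D.Ω, vort (u t) x) = L
-- ===== Auxiliary calculus lemmas =====
namespace NSAux
open ContinuousLinearMap

/-- basis vector -/
noncomputable def E2 (i : Fin 2) : Pt := EuclideanSpace.single i 1

lemma pd_comp_right {G : ℝ × Pt → ℝ} (hG : ContDiff ℝ (⊤ : ℕ∞) G) (t : ℝ) (x : Pt) (i : Fin 2) :
    pd i (fun y => G (t, y)) x = fderiv ℝ G (t, x) (0, E2 i) := by
  have h1 : HasFDerivAt (fun y : Pt => (t, y)) (inr ℝ ℝ Pt) x := hasFDerivAt_prodMk_right t x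
  have h3 := ((hG.differentiable (by simp) (t, x)).hasFDerivAt).comp x h1
  have : pd i (fun y => G (t, y)) x = fderiv ℝ (G ∘ (fun y : Pt => (t, y))) x (E2 i) := rfl
  rw [this, h3.fderiv]
  simp [E2]

lemma deriv_comp_left {G : ℝ × Pt → ℝ} (hG : ContDiff ℝ (⊤ : ℕ∞) G) (t : ℝ) (x : Pt) :
    deriv (fun s => G (s, x)) t = fderiv ℝ G (t, x) (1, 0) := by
  have h1 : HasFDerivAt (fun s : ℝ => (s, x)) (inl ℝ ℝ Pt) t := hasFDerivAt_prodMk_left t x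
  have h3 := ((hG.differentiable (by simp) (t, x)).hasFDerivAt).comp t h1
  have h4 : deriv (G ∘ (fun s : ℝ => (s, x))) t = _ := h3.hasDerivAt.deriv
  rw [show (fun s => G (s, x)) = G ∘ (fun s : ℝ => (s, x)) from rfl, h4]
  simp

lemma contDiff_fderiv_apply_const {V : Type*} [NormedAddCommGroup V] [NormedSpace ℝ V]
    {G : V → ℝ} (hG : ContDiff ℝ (⊤ : ℕ∞) G) (w : V) :
    ContDiff ℝ (⊤ : ℕ∞) (fun q => fderiv ℝ G q w) :=
  (ContinuousLinearMap.apply ℝ ℝ w).contDiff.comp (hG.fderiv_right (by simp))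

lemma fderiv_comm {V : Type*} [NormedAddCommGroup V] [NormedSpace ℝ V]
    {G : V → ℝ} (hG : ContDiff ℝ (⊤ : ℕ∞) G) (q v w : V) :
    fderiv ℝ (fun y => fderiv ℝ G y v) q w = fderiv ℝ (fun y => fderiv ℝ G y w) q v := by
  have hsymm : IsSymmSndFDerivAt ℝ G q := (hG.contDiffAt).isSymmSndFDerivAt (by simp only [minSmoothness_of_isRCLikeNormedField]; exact WithTop.coe_le_coe.mpr (le_top : (2 : ℕ∞) ≤ ⊤))
  have h2 : ContDiff ℝ (⊤ : ℕ∞) (fderiv ℝ G) := hG.fderiv_right (by simp)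
  have e : ∀ u : V, fderiv ℝ (fun y => fderiv ℝ G y u) q
      = (ContinuousLinearMap.apply ℝ ℝ u).comp (fderiv ℝ (fderiv ℝ G) q) := by
    intro u
    exact (((ContinuousLinearMap.apply ℝ ℝ u).hasFDerivAt).comp q
      ((h2.differentiable (by simp) q).hasFDerivAt)).fderiv
  rw [e v, e w]
  exact hsymm.eq w v

lemma pd_deriv_comm {G : ℝ × Pt → ℝ} (hG : ContDiff ℝ (⊤ : ℕ∞) G) (t : ℝ) (x : Pt) (i : Fin 2) :
    pd i (fun y => deriv (fun s => G (s, y)) t) x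
      = deriv (fun s => pd i (fun y => G (s, y)) x) t := by
  have h1 : (fun y => deriv (fun s => G (s, y)) t)
      = fun y => (fun q => fderiv ℝ G q ((1 : ℝ), (0 : Pt))) (t, y) :=
    funext fun y => deriv_comp_left hG t y
  have h2 : (fun s => pd i (fun y => G (s, y)) x)
      = fun s => (fun q => fderiv ℝ G q ((0 : ℝ), E2 i)) (s, x) :=
    funext fun s => pd_comp_right hG s x i
  rw [h1, h2, pd_comp_right (contDiff_fderiv_apply_const hG _) t x i,
    deriv_comp_left (contDiff_fderiv_apply_const hG _) t x]
  exact fderiv_comm hG (t, x) _ _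

lemma pd_pd_comm {f : Pt → ℝ} (hf : ContDiff ℝ (⊤ : ℕ∞) f) (i j : Fin 2) (x : Pt) :
    pd i (pd j f) x = pd j (pd i f) x := by
  show fderiv ℝ (fun y => fderiv ℝ f y (E2 j)) x (E2 i)
      = fderiv ℝ (fun y => fderiv ℝ f y (E2 i)) x (E2 j)
  exact fderiv_comm hf x _ _

lemma pd_sub {f g : Pt → ℝ} {x : Pt} (hf : DifferentiableAt ℝ f x)
    (hg : DifferentiableAt ℝ g x) (i : Fin 2) :
    pd i (fun y => f y - g y) x = pd i f x - pd i g x := by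
  simp [pd, fderiv_fun_sub hf hg]

lemma pd_add {f g : Pt → ℝ} {x : Pt} (hf : DifferentiableAt ℝ f x)
    (hg : DifferentiableAt ℝ g x) (i : Fin 2) :
    pd i (fun y => f y + g y) x = pd i f x + pd i g x := by
  simp [pd, fderiv_fun_add hf hg]

lemma pd_mul {f g : Pt → ℝ} {x : Pt} (hf : DifferentiableAt ℝ f x)
    (hg : DifferentiableAt ℝ g x) (i : Fin 2) :
    pd i (fun y => f y * g y) x = pd i f x * g x + f x * pd i g x := by
  simp [pd, fderiv_fun_mul hf hg]; ring

lemma pd_congr {f g : Pt → ℝ} {s : Set Pt} {x : Pt} (hs : IsOpen s) (hx : x ∈ s)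
    (h : ∀ y ∈ s, f y = g y) (i : Fin 2) : pd i f x = pd i g x := by
  have he : f =ᶠ[nhds x] g := Filter.eventuallyEq_of_mem (hs.mem_nhds hx) h
  simp [pd, he.fderiv_eq]

lemma pd_const {x : Pt} {c : ℝ} (i : Fin 2) : pd i (fun _ => c) x = 0 := by
  simp [pd]

end NSAux
namespace NSAux

lemma contDiff_comp {z : Pt → Pt} (hz : ContDiff ℝ (⊤ : ℕ∞) z) (j : Fin 2) :
    ContDiff ℝ (⊤ : ℕ∞) (fun y => z y j) :=
  (EuclideanSpace.proj j : EuclideanSpace ℝ (Fin 2) →L[ℝ] ℝ).contDiff.comp hz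

lemma contDiff_joint_comp {u : ℝ → Pt → Pt}
    (hu : ContDiff ℝ (⊤ : ℕ∞) (fun q : ℝ × Pt => u q.1 q.2)) (i : Fin 2) :
    ContDiff ℝ (⊤ : ℕ∞) (fun q : ℝ × Pt => u q.1 q.2 i) :=
  (EuclideanSpace.proj i : EuclideanSpace ℝ (Fin 2) →L[ℝ] ℝ).contDiff.comp hu

lemma contDiff_slice {G : ℝ × Pt → ℝ} (hG : ContDiff ℝ (⊤ : ℕ∞) G) (t : ℝ) :
    ContDiff ℝ (⊤ : ℕ∞) (fun x => G (t, x)) := hG.comp (contDiff_const.prodMk contDiff_id)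

lemma contDiff_slice_vec {u : ℝ → Pt → Pt}
    (hu : ContDiff ℝ (⊤ : ℕ∞) (fun q : ℝ × Pt => u q.1 q.2)) (t : ℝ) :
    ContDiff ℝ (⊤ : ℕ∞) (u t) := hu.comp (contDiff_const.prodMk contDiff_id)

lemma contDiff_pd {f : Pt → ℝ} (hf : ContDiff ℝ (⊤ : ℕ∞) f) (i : Fin 2) :
    ContDiff ℝ (⊤ : ℕ∞) (pd i f) := contDiff_fderiv_apply_const hf (E2 i)

/-- joint function representing `pd i (fun y => u s y j)` -/
noncomputable def pdJ (u : ℝ → Pt → Pt) (i j : Fin 2) : ℝ × Pt → ℝ :=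
  fun q => fderiv ℝ (fun q' : ℝ × Pt => u q'.1 q'.2 j) q ((0 : ℝ), E2 i)

lemma pdJ_eq {u : ℝ → Pt → Pt} (hu : ContDiff ℝ (⊤ : ℕ∞) (fun q : ℝ × Pt => u q.1 q.2))
    (i j : Fin 2) (t : ℝ) (x : Pt) :
    pd i (fun y => u t y j) x = pdJ u i j (t, x) :=
  pd_comp_right (contDiff_joint_comp hu j) t x i

lemma pdJ_contDiff {u : ℝ → Pt → Pt} (hu : ContDiff ℝ (⊤ : ℕ∞) (fun q : ℝ × Pt => u q.1 q.2))
    (i j : Fin 2) : ContDiff ℝ (⊤ : ℕ∞) (pdJ u i j) :=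
  contDiff_fderiv_apply_const (contDiff_joint_comp hu j) _

/-- joint function representing the vorticity -/
noncomputable def vortJ (u : ℝ → Pt → Pt) : ℝ × Pt → ℝ :=
  fun q => pdJ u 0 1 q - pdJ u 1 0 q

lemma vortJ_eq {u : ℝ → Pt → Pt} (hu : ContDiff ℝ (⊤ : ℕ∞) (fun q : ℝ × Pt => u q.1 q.2))
    (t : ℝ) (x : Pt) : vort (u t) x = vortJ u (t, x) := by
  unfold vort vortJ
  rw [← pdJ_eq hu 0 1 t x, ← pdJ_eq hu 1 0 t x]

lemma vortJ_contDiff {u : ℝ → Pt → Pt} (hu : ContDiff ℝ (⊤ : ℕ∞) (fun q : ℝ × Pt => u q.1 q.2)) :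
    ContDiff ℝ (⊤ : ℕ∞) (vortJ u) := (pdJ_contDiff hu 0 1).sub (pdJ_contDiff hu 1 0)

lemma contDiff_vort {u : ℝ → Pt → Pt} (hu : ContDiff ℝ (⊤ : ℕ∞) (fun q : ℝ × Pt => u q.1 q.2))
    (t : ℝ) : ContDiff ℝ (⊤ : ℕ∞) (vort (u t)) := by
  have : vort (u t) = fun x => vortJ u (t, x) := funext fun x => vortJ_eq hu t x
  rw [this]; exact contDiff_slice (vortJ_contDiff hu) t

/-- build a planar vector field from two scalar fields -/
noncomputable def mkVec (f g : Pt → ℝ) : Pt → Pt :=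
  fun x => (EuclideanSpace.equiv (Fin 2) ℝ).symm ![f x, g x]

@[simp] lemma mkVec_apply₀ (f g : Pt → ℝ) (x : Pt) : mkVec f g x 0 = f x := rfl
@[simp] lemma mkVec_apply₁ (f g : Pt → ℝ) (x : Pt) : mkVec f g x 1 = g x := rfl

lemma contDiff_mkVec {f g : Pt → ℝ} (hf : ContDiff ℝ (⊤ : ℕ∞) f) (hg : ContDiff ℝ (⊤ : ℕ∞) g) :
    ContDiff ℝ (⊤ : ℕ∞) (mkVec f g) := by
  apply ((EuclideanSpace.equiv (Fin 2) ℝ).symm.contDiff).comp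
  apply contDiff_pi.mpr
  intro i
  fin_cases i <;> simpa

end NSAux
namespace NSAux
open MeasureTheory

lemma integrableOn_of_continuous {Ω : Set Pt} (hb : Bornology.IsBounded Ω)
    {f : Pt → ℝ} (hf : Continuous f) : IntegrableOn f Ω :=
  ((hf.continuousOn).integrableOn_compact hb.isCompact_closure).mono_set subset_closure

lemma memLp_of_continuous {Ω : Set Pt} (hmeas : MeasurableSet Ω) (hb : Bornology.IsBounded Ω)
    {f : Pt → ℝ} (hf : Continuous f) (p : ENNReal) : MemLp f p (volume.restrict Ω) := by
  haveI : IsFiniteMeasure (volume.restrict Ω) :=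
    ⟨by rw [Measure.restrict_apply_univ]; exact hb.measure_lt_top⟩
  obtain ⟨C, hC⟩ := hb.isCompact_closure.exists_bound_of_continuousOn hf.continuousOn
  exact MemLp.of_bound hf.aestronglyMeasurable C
    ((ae_restrict_mem hmeas).mono fun x hx => hC x (subset_closure hx))

lemma setIntegral_cs {Ω : Set Pt} (hmeas : MeasurableSet Ω) (hb : Bornology.IsBounded Ω)
    {f g : Pt → ℝ} (hf : Continuous f) (hg : Continuous g)
    (hf0 : ∀ x, 0 ≤ f x) (hg0 : ∀ x, 0 ≤ g x) :
    ∫ x in Ω, f x * g x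
      ≤ (∫ x in Ω, f x ^ 2) ^ (1/2 : ℝ) * (∫ x in Ω, g x ^ 2) ^ (1/2 : ℝ) := by
  have hpq : Real.HolderConjugate 2 2 := Real.HolderConjugate.two_two
  have h := integral_mul_le_Lp_mul_Lq_of_nonneg (μ := volume.restrict Ω) hpq
    (Filter.Eventually.of_forall hf0) (Filter.Eventually.of_forall hg0)
    (by simpa using memLp_of_continuous hmeas hb hf (ENNReal.ofReal 2))
    (by simpa using memLp_of_continuous hmeas hb hg (ENNReal.ofReal 2))
  have e : ∀ a : ℝ, a ^ (2 : ℝ) = a ^ 2 := fun a => by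
    rw [show (2:ℝ) = ((2:ℕ):ℝ) by norm_num, Real.rpow_natCast]
  simp_rw [e] at h
  exact h

lemma div_smul_thm (D : SmoothDomain2) {c : Pt → ℝ} {z : Pt → Pt}
    (hc : ContDiff ℝ (⊤ : ℕ∞) c) (hz : ContDiff ℝ (⊤ : ℕ∞) z) :
    (∫ x in D.Ω, ((∑ j, pd j c x * z x j) + c x * div2 z x))
      = ∫ x in frontier D.Ω, (c x * ∑ j, z x j * D.n x j) ∂D.σ := by
  have hF : ContDiff ℝ (⊤ : ℕ∞) (fun x => c x • z x) := hc.smul hz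
  have hdiv : ∀ x, div2 (fun y => c y • z y) x
      = (∑ j, pd j c x * z x j) + c x * div2 z x := by
    intro x
    unfold div2
    have e : ∀ j : Fin 2, (fun y => (c y • z y) j) = fun y => c y * z y j := by
      intro j; funext y; simp
    rw [e 0, e 1,
      pd_mul (hc.differentiable (by simp) x) ((contDiff_comp hz 0).differentiable (by simp) x) 0,
      pd_mul (hc.differentiable (by simp) x) ((contDiff_comp hz 1).differentiable (by simp) x) 1]
    simp [Fin.sum_univ_two]; ring
  have h := D.divergence_thm _ hF
  have h1 : (∫ x in D.Ω, ((∑ j, pd j c x * z x j) + c x * div2 z x))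
      = ∫ x in D.Ω, div2 (fun y => c y • z y) x :=
    integral_congr_ae (Filter.Eventually.of_forall fun x => (hdiv x).symm)
  rw [h1, h]
  apply integral_congr_ae
  refine Filter.Eventually.of_forall fun x => ?_
  simp only [Finset.mul_sum]
  exact Finset.sum_congr rfl fun j _ => by simp; ring

end NSAux
namespace NSAux
open MeasureTheory

lemma vorticity_equation (D : SmoothDomain2) {T : ℝ} {u : ℝ → Pt → Pt} {p : ℝ → Pt → ℝ}
    (hu : ContDiff ℝ (⊤ : ℕ∞) (fun q : ℝ × Pt => u q.1 q.2))
    (hp : ContDiff ℝ (⊤ : ℕ∞) (fun q : ℝ × Pt => p q.1 q.2))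
    (hmom : ∀ t ∈ Set.Ioo (0:ℝ) T, ∀ x ∈ D.Ω, ∀ i : Fin 2,
      deriv (fun s => u s x i) t + conv (u t) x i + pd i (p t) x
        - (∑ j, pd j (fun y => pd j (fun z => u t z i) y) x) = 0)
    (hdiv : ∀ t ∈ Set.Ioo (0:ℝ) T, ∀ x ∈ D.Ω, div2 (u t) x = 0)
    {t : ℝ} (ht : t ∈ Set.Ioo (0:ℝ) T) {x : Pt} (hx : x ∈ D.Ω) :
    deriv (fun s => vort (u s) x) t
      = (∑ j, pd j (pd j (vort (u t))) x) - ∑ j, u t x j * pd j (vort (u t)) x := by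
  have hut : ContDiff ℝ (⊤ : ℕ∞) (u t) := contDiff_slice_vec hu t
  have hU : ∀ i : Fin 2, ContDiff ℝ (⊤ : ℕ∞) (fun y => u t y i) := fun i => contDiff_comp hut i
  have hUd : ∀ (i : Fin 2) (x' : Pt), DifferentiableAt ℝ (fun y => u t y i) x' :=
    fun i x' => (hU i).differentiable (by simp) x'
  have hU1 : ∀ i j : Fin 2, ContDiff ℝ (⊤ : ℕ∞) (pd j (fun y => u t y i)) :=
    fun i j => contDiff_pd (hU i) j
  have hU2 : ∀ i j k : Fin 2, ContDiff ℝ (⊤ : ℕ∞) (pd k (pd j (fun y => u t y i))) :=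
    fun i j k => contDiff_pd (hU1 i j) k
  have hP : ContDiff ℝ (⊤ : ℕ∞) (p t) := contDiff_slice hp t
  have hAc : ∀ i : Fin 2, ContDiff ℝ (⊤ : ℕ∞) (fun y => deriv (fun s => u s y i) t) := by
    intro i
    have h0 : (fun y => deriv (fun s => u s y i) t)
        = fun y => fderiv ℝ (fun q : ℝ × Pt => u q.1 q.2 i) (t, y) ((1:ℝ), (0:Pt)) :=
      funext fun y => deriv_comp_left (contDiff_joint_comp hu i) t y
    rw [h0]
    exact contDiff_slice (contDiff_fderiv_apply_const (contDiff_joint_comp hu i) _) t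
  -- expansion of the curl of each momentum component
  have hexp : ∀ k i : Fin 2,
      deriv (fun s => pdJ u k i (s, x)) t
      + (pd k (fun y => u t y 0) x * pd 0 (fun y => u t y i) x
          + u t x 0 * pd k (pd 0 (fun y => u t y i)) x
          + (pd k (fun y => u t y 1) x * pd 1 (fun y => u t y i) x
          + u t x 1 * pd k (pd 1 (fun y => u t y i)) x))
      + pd k (pd i (p t)) x
      - (pd k (pd 0 (pd 0 (fun y => u t y i))) x
          + pd k (pd 1 (pd 1 (fun y => u t y i))) x) = 0 := by
    intro k i
    -- the momentum function, in expanded form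
    have hm' : ∀ y ∈ D.Ω,
        (deriv (fun s => u s y i) t
          + (u t y 0 * pd 0 (fun z => u t z i) y + u t y 1 * pd 1 (fun z => u t z i) y)
          + pd i (p t) y)
        - (pd 0 (pd 0 (fun z => u t z i)) y + pd 1 (pd 1 (fun z => u t z i)) y) = 0 := by
      intro y hy
      have h := hmom t ht y hy i
      simp only [conv, Fin.sum_univ_two] at h
      linarith [h]
    have hzero : pd k (fun y =>
        (deriv (fun s => u s y i) t
          + (u t y 0 * pd 0 (fun z => u t z i) y + u t y 1 * pd 1 (fun z => u t z i) y)
          + pd i (p t) y)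
        - (pd 0 (pd 0 (fun z => u t z i)) y + pd 1 (pd 1 (fun z => u t z i)) y)) x
        = 0 := by
      rw [pd_congr D.isOpen hx hm' k]
      exact pd_const k
    -- differentiability facts
    have d1 : DifferentiableAt ℝ (fun y =>
        deriv (fun s => u s y i) t
          + (u t y 0 * pd 0 (fun z => u t z i) y + u t y 1 * pd 1 (fun z => u t z i) y)
          + pd i (p t) y) x := by
      apply DifferentiableAt.add
      apply DifferentiableAt.add
      · exact ((hAc i).differentiable (by simp) x)
      · exact ((hUd 0 x).mul ((hU1 i 0).differentiable (by simp) x)).add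
          ((hUd 1 x).mul ((hU1 i 1).differentiable (by simp) x))
      · exact ((contDiff_pd hP i).differentiable (by simp) x)
    have d2 : DifferentiableAt ℝ (fun y =>
        pd 0 (pd 0 (fun z => u t z i)) y + pd 1 (pd 1 (fun z => u t z i)) y) x :=
      ((hU2 i 0 0).differentiable (by simp) x).add ((hU2 i 1 1).differentiable (by simp) x)
    rw [pd_sub d1 d2 k] at hzero
    have d3 : DifferentiableAt ℝ (fun y =>
        deriv (fun s => u s y i) t
          + (u t y 0 * pd 0 (fun z => u t z i) y + u t y 1 * pd 1 (fun z => u t z i) y)) x :=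
      ((hAc i).differentiable (by simp) x).add
        (((hUd 0 x).mul ((hU1 i 0).differentiable (by simp) x)).add
          ((hUd 1 x).mul ((hU1 i 1).differentiable (by simp) x)))
    rw [pd_add d3 ((contDiff_pd hP i).differentiable (by simp) x) k] at hzero
    rw [pd_add (f := fun y => deriv (fun s => u s y i) t)
      (g := fun y => u t y 0 * pd 0 (fun z => u t z i) y + u t y 1 * pd 1 (fun z => u t z i) y)
      ((hAc i).differentiable (by simp) x)
      (((hUd 0 x).mul ((hU1 i 0).differentiable (by simp) x)).add
        ((hUd 1 x).mul ((hU1 i 1).differentiable (by simp) x))) k] at hzero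
    rw [pd_add (f := fun y => u t y 0 * pd 0 (fun z => u t z i) y)
      (g := fun y => u t y 1 * pd 1 (fun z => u t z i) y) ((hUd 0 x).mul ((hU1 i 0).differentiable (by simp) x))
      ((hUd 1 x).mul ((hU1 i 1).differentiable (by simp) x)) k] at hzero
    rw [pd_mul (hUd 0 x) ((hU1 i 0).differentiable (by simp) x) k] at hzero
    rw [pd_mul (hUd 1 x) ((hU1 i 1).differentiable (by simp) x) k] at hzero
    rw [pd_add ((hU2 i 0 0).differentiable (by simp) x) ((hU2 i 1 1).differentiable (by simp) x) k]
      at hzero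
    -- time term
    have hA : pd k (fun y => deriv (fun s => u s y i) t) x
        = deriv (fun s => pdJ u k i (s, x)) t := by
      have h1 : pd k (fun y => deriv (fun s => u s y i) t) x
          = deriv (fun s => pd k (fun y => u s y i) x) t :=
        pd_deriv_comm (contDiff_joint_comp hu i) t x k
      rw [h1]
      congr 1
      exact funext fun s => pdJ_eq hu k i s x
    rw [hA] at hzero
    linarith [hzero]
  have h01 := hexp 0 1
  have h10 := hexp 1 0
  -- time derivative of vorticity
  have hdJ : ∀ k i : Fin 2, DifferentiableAt ℝ (fun s => pdJ u k i (s, x)) t :=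
    fun k i => (((pdJ_contDiff hu k i).comp
      (contDiff_id.prodMk contDiff_const)).differentiable (by simp) t)
  have hTT : deriv (fun s => vort (u s) x) t
      = deriv (fun s => pdJ u 0 1 (s, x)) t - deriv (fun s => pdJ u 1 0 (s, x)) t := by
    have h1 : (fun s => vort (u s) x) = fun s => pdJ u 0 1 (s, x) - pdJ u 1 0 (s, x) :=
      funext fun s => vortJ_eq hu s x
    rw [h1]
    exact deriv_fun_sub (hdJ 0 1) (hdJ 1 0)
  -- gradient of vorticity components
  have hgrad : ∀ j : Fin 2, pd j (vort (u t)) x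
      = pd j (pd 0 (fun y => u t y 1)) x - pd j (pd 1 (fun y => u t y 0)) x := by
    intro j
    have h1 : vort (u t) = fun y =>
        pd 0 (fun z => u t z 1) y - pd 1 (fun z => u t z 0) y := rfl
    rw [h1, pd_sub ((hU1 1 0).differentiable (by simp) x) ((hU1 0 1).differentiable (by simp) x) j]
  -- second derivatives of vorticity
  have hlap : ∀ j : Fin 2, pd j (pd j (vort (u t))) x
      = pd j (pd j (pd 0 (fun y => u t y 1))) x - pd j (pd j (pd 1 (fun y => u t y 0))) x := by
    intro j
    have h1 : pd j (vort (u t)) = fun y =>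
        pd j (pd 0 (fun z => u t z 1)) y - pd j (pd 1 (fun z => u t z 0)) y := by
      funext y
      have h2 : vort (u t) = fun y' =>
          pd 0 (fun z => u t z 1) y' - pd 1 (fun z => u t z 0) y' := rfl
      rw [h2, pd_sub ((hU1 1 0).differentiable (by simp) y) ((hU1 0 1).differentiable (by simp) y) j]
    rw [h1, pd_sub ((hU2 1 0 j).differentiable (by simp) x) ((hU2 0 1 j).differentiable (by simp) x) j]
  -- divergence-free, pointwise
  have hdv : pd 0 (fun y => u t y 0) x + pd 1 (fun y => u t y 1) x = 0 := hdiv t ht x hx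
  -- Clairaut commutations needed
  have c1 : pd 0 (pd 1 (pd 1 (fun y => u t y 1))) x
      = pd 1 (pd 1 (pd 0 (fun y => u t y 1))) x := by
    have e1 : pd 0 (pd 1 (pd 1 (fun y => u t y 1))) x
        = pd 1 (pd 0 (pd 1 (fun y => u t y 1))) x := pd_pd_comm (hU1 1 1) 0 1 x
    have e2 : pd 0 (pd 1 (fun y => u t y 1)) = pd 1 (pd 0 (fun y => u t y 1)) :=
      funext fun y => pd_pd_comm (hU 1) 0 1 y
    rw [e1, e2]
  have c2 : pd 1 (pd 0 (pd 0 (fun y => u t y 0))) x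
      = pd 0 (pd 0 (pd 1 (fun y => u t y 0))) x := by
    have e1 : pd 1 (pd 0 (pd 0 (fun y => u t y 0))) x
        = pd 0 (pd 1 (pd 0 (fun y => u t y 0))) x := pd_pd_comm (hU1 0 0) 1 0 x
    have e2 : pd 1 (pd 0 (fun y => u t y 0)) = pd 0 (pd 1 (fun y => u t y 0)) :=
      funext fun y => pd_pd_comm (hU 0) 1 0 y
    rw [e1, e2]
  have c3 : pd 0 (pd 1 (fun y => u t y 1)) x = pd 1 (pd 0 (fun y => u t y 1)) x :=
    pd_pd_comm (hU 1) 0 1 x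
  have c4 : pd 1 (pd 0 (fun y => u t y 0)) x = pd 0 (pd 1 (fun y => u t y 0)) x :=
    pd_pd_comm (hU 0) 1 0 x
  -- pressure terms
  have cp : pd 0 (pd 1 (p t)) x = pd 1 (pd 0 (p t)) x := pd_pd_comm hP 0 1 x
  -- assemble
  rw [hTT, Fin.sum_univ_two, Fin.sum_univ_two, hlap 0, hlap 1, hgrad 0, hgrad 1]
  linear_combination h01 - h10 - cp + c1 - c2 - (u t x 1) * c3 + (u t x 0) * c4
    + (pd 1 (fun y => u t y 0) x - pd 0 (fun y => u t y 1) x) * hdv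

end NSAux
namespace NSAux
open MeasureTheory

lemma hasDerivAt_setIntegral {Ω : Set Pt} (hb : Bornology.IsBounded Ω)
    (hmeas : MeasurableSet Ω) {H : ℝ × Pt → ℝ} (hH : ContDiff ℝ (⊤ : ℕ∞) H) (t : ℝ) :
    HasDerivAt (fun s => ∫ x in Ω, H (s, x)) (∫ x in Ω, fderiv ℝ H (t, x) ((1:ℝ), (0:Pt))) t := by
  haveI : IsFiniteMeasure (volume.restrict Ω) :=
    ⟨by rw [Measure.restrict_apply_univ]; exact hb.measure_lt_top⟩
  have hcontH : Continuous H := hH.continuous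
  have hcontH' : Continuous (fun q : ℝ × Pt => fderiv ℝ H q ((1:ℝ), (0:Pt))) :=
    (contDiff_fderiv_apply_const hH _).continuous
  have hKc : IsCompact ((Set.Icc (t-1) (t+1)) ×ˢ closure Ω) :=
    isCompact_Icc.prod hb.isCompact_closure
  obtain ⟨C, hC⟩ := hKc.exists_bound_of_continuousOn hcontH'.continuousOn
  have key := hasDerivAt_integral_of_dominated_loc_of_deriv_le
    (F := fun s x => H (s, x)) (F' := fun s x => fderiv ℝ H (s, x) ((1:ℝ), (0:Pt)))
    (μ := volume.restrict Ω) (x₀ := t) (s := Metric.ball t 1) (bound := fun _ => C) (Metric.ball_mem_nhds t one_pos)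
    (Filter.Eventually.of_forall fun s =>
      (hcontH.comp (continuous_const.prodMk continuous_id)).aestronglyMeasurable)
    (integrableOn_of_continuous hb (hcontH.comp (continuous_const.prodMk continuous_id)))
    ((hcontH'.comp (continuous_const.prodMk continuous_id)).aestronglyMeasurable)
    ?_ (integrable_const C) ?_
  · exact key.2
  · refine (ae_restrict_mem hmeas).mono fun x hx => fun s hs => ?_
    have hsI : s ∈ Set.Icc (t-1) (t+1) := by
      have := Metric.mem_ball.mp hs
      constructor <;> [linarith [abs_lt.mp (by simpa [Real.dist_eq] using this)] ;
        linarith [abs_lt.mp (by simpa [Real.dist_eq] using this)]]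
    exact hC (s, x) ⟨hsI, subset_closure hx⟩
  · refine Filter.Eventually.of_forall fun x => fun s _ => ?_
    have h1 := ((hH.differentiable (by simp) (s, x)).hasFDerivAt.comp s
      (hasFDerivAt_prodMk_left s x)).hasDerivAt
    simpa [Function.comp_def] using h1

end NSAux
namespace NSAux
lemma rpow_half_sq {y : ℝ} (hy : 0 ≤ y) : (y ^ (1/2:ℝ)) ^ 2 = y := by
  rw [← Real.rpow_natCast (y ^ (1/2:ℝ)) 2, ← Real.rpow_mul hy]
  push_cast
  rw [show (1/2:ℝ) * 2 = 1 by norm_num, Real.rpow_one]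
end NSAux
namespace NSAux
lemma young_aux {c a q p : ℝ} (hq : 0 ≤ q) (hp : 0 ≤ p) :
    2 * ((a * (c * q ^ (1/2:ℝ))) * p ^ (1/2:ℝ)) ≤ c ^ 2 * a ^ 2 * q + p := by
  have eQ := rpow_half_sq hq
  have eP := rpow_half_sq hp
  calc 2 * ((a * (c * q ^ (1/2:ℝ))) * p ^ (1/2:ℝ))
      ≤ (c * a * q ^ (1/2:ℝ)) ^ 2 + (p ^ (1/2:ℝ)) ^ 2 := by
        nlinarith [sq_nonneg (c * a * q ^ (1/2:ℝ) - p ^ (1/2:ℝ))]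
    _ = c ^ 2 * a ^ 2 * (q ^ (1/2:ℝ)) ^ 2 + p := by rw [eP]; ring
    _ = c ^ 2 * a ^ 2 * q + p := by rw [eQ]
end NSAux
set_option maxHeartbeats 2000000 in
open NSAux in
/-- differential inequality for the difference of vorticities.
Let `C₁ > 0` satisfy `‖v‖_{L⁴(Ω)} ≤ C₁ ‖curl v‖_{L²(Ω)}` for every smooth
divergence-free `v` tangent to `∂Ω`. Then for two classical solutions and every
`t ∈ (0,T)`,
`d/dt ∫_Ω (ω₁−ω₂)² + ∫_Ω |∇(ω₁−ω₂)|² ≤ C₁² ‖ω₂(·,t)‖²_{L⁴} ∫_Ω (ω₁−ω₂)²`. -/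
theorem difference_vorticity_differential_inequality
    (D : SmoothDomain2) (C₁ : ℝ) (hC₁ : 0 < C₁)
    (hest : ∀ v : Pt → Pt, ContDiff ℝ (⊤ : ℕ∞) v →
      (∀ x ∈ D.Ω, div2 v x = 0) →
      (∀ x ∈ frontier D.Ω, (∑ j, v x j * D.n x j) = 0) →
      (∫ x in D.Ω, vecSq v x ^ 2) ^ (1/4 : ℝ) ≤ C₁ * L2 D.Ω (vort v))
    (T : ℝ) (hT : 0 < T)
    (u₀₁ u₀₂ : Pt → Pt) (L₁ L₂ : ℝ)
    (u₁ u₂ : ℝ → Pt → Pt) (p₁ p₂ : ℝ → Pt → ℝ) (h₁ h₂ : ℝ → ℝ)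
    (hsol₁ : IsNSSol D T u₀₁ L₁ u₁ p₁ h₁)
    (hsol₂ : IsNSSol D T u₀₂ L₂ u₂ p₂ h₂) :
    ∀ t ∈ Set.Ioo (0:ℝ) T,
      deriv (fun s => ∫ x in D.Ω, (vort (u₁ s) x - vort (u₂ s) x) ^ 2) t
        + (∫ x in D.Ω, gradSq (fun y => vort (u₁ t) y - vort (u₂ t) y) x)
      ≤ C₁ ^ 2 * L4 D.Ω (vort (u₂ t)) ^ 2
          * ∫ x in D.Ω, (vort (u₁ t) x - vort (u₂ t) x) ^ 2 := by
  intro t ht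
  classical
  have hu₁ := hsol₁.smooth_u
  have hu₂ := hsol₂.smooth_u
  have hb := D.bounded
  have hmeas : MeasurableSet D.Ω := D.isOpen.measurableSet
  have hfmeas : MeasurableSet (frontier D.Ω) := isClosed_frontier.measurableSet
  haveI : IsFiniteMeasure (volume.restrict D.Ω) :=
    ⟨by rw [Measure.restrict_apply_univ]; exact hb.measure_lt_top⟩
  -- the difference fields
  have hW : ContDiff ℝ (⊤ : ℕ∞) (fun y => vort (u₁ t) y - vort (u₂ t) y) :=
    (contDiff_vort hu₁ t).sub (contDiff_vort hu₂ t)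
  have hv : ContDiff ℝ (⊤ : ℕ∞) (fun y => u₁ t y - u₂ t y) :=
    (contDiff_slice_vec hu₁ t).sub (contDiff_slice_vec hu₂ t)
  have hω₂ : ContDiff ℝ (⊤ : ℕ∞) (vort (u₂ t)) := contDiff_vort hu₂ t
  have hWJ : ContDiff ℝ (⊤ : ℕ∞) (fun q : ℝ × Pt => vortJ u₁ q - vortJ u₂ q) :=
    (vortJ_contDiff hu₁).sub (vortJ_contDiff hu₂)
  have hWJt : ∀ s (x : Pt), vortJ u₁ (s, x) - vortJ u₂ (s, x)
      = vort (u₁ s) x - vort (u₂ s) x := by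
    intro s x; rw [vortJ_eq hu₁ s x, vortJ_eq hu₂ s x]
  -- components of v
  have hvcomp : ∀ (x : Pt) (j : Fin 2), (u₁ t x - u₂ t x) j = u₁ t x j - u₂ t x j := by
    intro x j; rfl
  -- div-free and slip for v
  have hdiv1 := hsol₁.divFree t ht
  have hdiv2 := hsol₂.divFree t ht
  have hdivv : ∀ x ∈ D.Ω, div2 (fun y => u₁ t y - u₂ t y) x = 0 := by
    intro x hx
    have h1 : pd 0 (fun y => u₁ t y 0) x + pd 1 (fun y => u₁ t y 1) x = 0 := hdiv1 x hx
    have h2 : pd 0 (fun y => u₂ t y 0) x + pd 1 (fun y => u₂ t y 1) x = 0 := hdiv2 x hx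
    show pd 0 (fun y => (u₁ t y - u₂ t y) 0) x + pd 1 (fun y => (u₁ t y - u₂ t y) 1) x = 0
    have e0 : (fun y => (u₁ t y - u₂ t y) 0) = fun y => u₁ t y 0 - u₂ t y 0 := rfl
    have e1 : (fun y => (u₁ t y - u₂ t y) 1) = fun y => u₁ t y 1 - u₂ t y 1 := rfl
    rw [e0, e1,
      pd_sub ((contDiff_comp (contDiff_slice_vec hu₁ t) 0).differentiable (by simp) x)
             ((contDiff_comp (contDiff_slice_vec hu₂ t) 0).differentiable (by simp) x) 0,
      pd_sub ((contDiff_comp (contDiff_slice_vec hu₁ t) 1).differentiable (by simp) x)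
             ((contDiff_comp (contDiff_slice_vec hu₂ t) 1).differentiable (by simp) x) 1]
    linarith
  have hslipv : ∀ x ∈ frontier D.Ω,
      (∑ j, (fun y => u₁ t y - u₂ t y) x j * D.n x j) = 0 := by
    intro x hx
    have h1 := hsol₁.slip t ht x hx
    have h2 := hsol₂.slip t ht x hx
    simp only [Fin.sum_univ_two] at h1 h2 ⊢
    rw [hvcomp x 0, hvcomp x 1]
    ring_nf
    ring_nf at h1 h2
    linarith
  -- vorticity of v is W
  have hvortv : vort (fun y => u₁ t y - u₂ t y)
      = fun y => vort (u₁ t) y - vort (u₂ t) y := by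
    funext x
    show pd 0 (fun y => (u₁ t y - u₂ t y) 1) x - pd 1 (fun y => (u₁ t y - u₂ t y) 0) x
      = vort (u₁ t) x - vort (u₂ t) x
    have e0 : (fun y => (u₁ t y - u₂ t y) 0) = fun y => u₁ t y 0 - u₂ t y 0 := rfl
    have e1 : (fun y => (u₁ t y - u₂ t y) 1) = fun y => u₁ t y 1 - u₂ t y 1 := rfl
    rw [e0, e1,
      pd_sub ((contDiff_comp (contDiff_slice_vec hu₁ t) 1).differentiable (by simp) x)
             ((contDiff_comp (contDiff_slice_vec hu₂ t) 1).differentiable (by simp) x) 0,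
      pd_sub ((contDiff_comp (contDiff_slice_vec hu₁ t) 0).differentiable (by simp) x)
             ((contDiff_comp (contDiff_slice_vec hu₂ t) 0).differentiable (by simp) x) 1]
    show _ = (pd 0 (fun y => u₁ t y 1) x - pd 1 (fun y => u₁ t y 0) x)
      - (pd 0 (fun y => u₂ t y 1) x - pd 1 (fun y => u₂ t y 0) x)
    ring
  -- gradient identities
  have g1 : ∀ (j : Fin 2) (x : Pt), pd j (fun y => vort (u₁ t) y - vort (u₂ t) y) x
      = pd j (vort (u₁ t)) x - pd j (vort (u₂ t)) x := fun j x =>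
    pd_sub ((contDiff_vort hu₁ t).differentiable (by simp) x)
      ((contDiff_vort hu₂ t).differentiable (by simp) x) j
  have g2 : ∀ (j : Fin 2) (x : Pt),
      pd j (pd j (fun y => vort (u₁ t) y - vort (u₂ t) y)) x
      = pd j (pd j (vort (u₁ t))) x - pd j (pd j (vort (u₂ t))) x := by
    intro j x
    have e : pd j (fun y => vort (u₁ t) y - vort (u₂ t) y)
        = fun x' => pd j (vort (u₁ t)) x' - pd j (vort (u₂ t)) x' := funext fun x' => g1 j x'
    rw [e, pd_sub ((contDiff_pd (contDiff_vort hu₁ t) j).differentiable (by simp) x)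
      ((contDiff_pd (contDiff_vort hu₂ t) j).differentiable (by simp) x) j]
  -- the equation for the difference of the vorticities
  have hdtW : ∀ x ∈ D.Ω,
      deriv (fun s => vortJ u₁ (s, x) - vortJ u₂ (s, x)) t
      = (∑ j, pd j (pd j (fun y => vort (u₁ t) y - vort (u₂ t) y)) x)
        - (∑ j, u₁ t x j * pd j (fun y => vort (u₁ t) y - vort (u₂ t) y) x)
        - (∑ j, (u₁ t x j - u₂ t x j) * pd j (vort (u₂ t)) x) := by
    intro x hx
    have hd1 : DifferentiableAt ℝ (fun s => vortJ u₁ (s, x)) t :=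
      ((vortJ_contDiff hu₁).comp (contDiff_id.prodMk contDiff_const)).differentiable (by simp) t
    have hd2 : DifferentiableAt ℝ (fun s => vortJ u₂ (s, x)) t :=
      ((vortJ_contDiff hu₂).comp (contDiff_id.prodMk contDiff_const)).differentiable (by simp) t
    rw [deriv_fun_sub hd1 hd2]
    have e1 : (fun s => vortJ u₁ (s, x)) = fun s => vort (u₁ s) x :=
      funext fun s => (vortJ_eq hu₁ s x).symm
    have e2 : (fun s => vortJ u₂ (s, x)) = fun s => vort (u₂ s) x :=
      funext fun s => (vortJ_eq hu₂ s x).symm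
    rw [e1, e2,
      vorticity_equation D hu₁ hsol₁.smooth_p hsol₁.momentum hsol₁.divFree ht hx,
      vorticity_equation D hu₂ hsol₂.smooth_p hsol₂.momentum hsol₂.divFree ht hx]
    simp only [Fin.sum_univ_two]
    rw [g1 0 x, g1 1 x, g2 0 x, g2 1 x]
    ring
  -- derivative of the energy
  have hE : deriv (fun s => ∫ x in D.Ω, (vort (u₁ s) x - vort (u₂ s) x) ^ 2) t
      = ∫ x in D.Ω, 2 * (vort (u₁ t) x - vort (u₂ t) x)
          * deriv (fun s => vortJ u₁ (s, x) - vortJ u₂ (s, x)) t := by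
    have hH2 : ContDiff ℝ (⊤ : ℕ∞) (fun q : ℝ × Pt => (vortJ u₁ q - vortJ u₂ q) ^ 2) := hWJ.pow 2
    have key := hasDerivAt_setIntegral hb hmeas hH2 t
    have efun : (fun s => ∫ x in D.Ω, (vort (u₁ s) x - vort (u₂ s) x) ^ 2)
        = fun s => ∫ x in D.Ω, (vortJ u₁ (s, x) - vortJ u₂ (s, x)) ^ 2 := by
      funext s
      refine integral_congr_ae (Filter.Eventually.of_forall fun x => ?_)
      show (vort (u₁ s) x - vort (u₂ s) x) ^ 2 = (vortJ u₁ (s, x) - vortJ u₂ (s, x)) ^ 2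
      rw [hWJt s x]
    rw [efun, key.deriv]
    apply integral_congr_ae
    refine Filter.Eventually.of_forall fun x => ?_
    show fderiv ℝ (fun q : ℝ × Pt => (vortJ u₁ q - vortJ u₂ q) ^ 2) (t, x) ((1:ℝ), (0:Pt))
      = 2 * (vort (u₁ t) x - vort (u₂ t) x)
        * deriv (fun s => vortJ u₁ (s, x) - vortJ u₂ (s, x)) t
    have hsl : DifferentiableAt ℝ (fun s => vortJ u₁ (s, x) - vortJ u₂ (s, x)) t :=
      (hWJ.comp (contDiff_id.prodMk contDiff_const)).differentiable (by simp) t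
    have hpow : deriv (fun s => (vortJ u₁ (s, x) - vortJ u₂ (s, x)) ^ 2) t = _ :=
      (hsl.hasDerivAt.pow 2).deriv
    have e1 : fderiv ℝ (fun q : ℝ × Pt => (vortJ u₁ q - vortJ u₂ q) ^ 2) (t, x) ((1:ℝ), (0:Pt))
        = deriv (fun s => (vortJ u₁ (s, x) - vortJ u₂ (s, x)) ^ 2) t :=
      (deriv_comp_left hH2 t x).symm
    rw [e1, hpow, hWJt t x]
    push_cast
    ring
  -- time-constancy of the mean of the vorticity difference
  have hIdt : (∫ x in D.Ω, deriv (fun s => vortJ u₁ (s, x) - vortJ u₂ (s, x)) t) = 0 := by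
    have key := hasDerivAt_setIntegral hb hmeas hWJ t
    have hvol : (volume D.Ω).toReal ≠ 0 :=
      ne_of_gt (ENNReal.toReal_pos (D.isOpen.measure_pos volume D.nonempty).ne'
        hb.measure_lt_top.ne)
    have hconst : (fun s => ∫ x in D.Ω, (vortJ u₁ (s, x) - vortJ u₂ (s, x)))
        =ᶠ[nhds t] fun _ => (volume D.Ω).toReal * L₁ - (volume D.Ω).toReal * L₂ := by
      filter_upwards [isOpen_Ioo.mem_nhds ht] with s hs
      have a1 := hsol₁.vortAvg s hs
      have a2 := hsol₂.vortAvg s hs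
      have i1 : IntegrableOn (fun x => vort (u₁ s) x) D.Ω volume :=
        integrableOn_of_continuous hb (contDiff_vort hu₁ s).continuous
      have i2 : IntegrableOn (fun x => vort (u₂ s) x) D.Ω volume :=
        integrableOn_of_continuous hb (contDiff_vort hu₂ s).continuous
      have ec : (fun x : Pt => vortJ u₁ (s, x) - vortJ u₂ (s, x))
          = fun x => vort (u₁ s) x - vort (u₂ s) x := funext fun x => hWJt s x
      rw [ec, integral_sub i1 i2]
      field_simp at a1 a2
      ring_nf at a1 a2 ⊢
      rw [a1, a2]
    have h0 : deriv (fun s => ∫ x in D.Ω, (vortJ u₁ (s, x) - vortJ u₂ (s, x))) t = 0 := by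
      rw [Filter.EventuallyEq.deriv_eq hconst]; exact deriv_const t _
    calc (∫ x in D.Ω, deriv (fun s => vortJ u₁ (s, x) - vortJ u₂ (s, x)) t)
        = ∫ x in D.Ω, fderiv ℝ (fun q : ℝ × Pt => vortJ u₁ q - vortJ u₂ q) (t, x)
            ((1:ℝ), (0:Pt)) :=
          integral_congr_ae (Filter.Eventually.of_forall fun x => deriv_comp_left hWJ t x)
      _ = deriv (fun s => ∫ x in D.Ω, (vortJ u₁ (s, x) - vortJ u₂ (s, x))) t := key.deriv.symm
      _ = 0 := h0
  -- continuity facts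
  have contW : Continuous (fun y => vort (u₁ t) y - vort (u₂ t) y) := hW.continuous
  have contPdW : ∀ j : Fin 2, Continuous (pd j (fun y => vort (u₁ t) y - vort (u₂ t) y)) :=
    fun j => (contDiff_pd hW j).continuous
  have contPd2W : ∀ j : Fin 2,
      Continuous (pd j (pd j (fun y => vort (u₁ t) y - vort (u₂ t) y))) :=
    fun j => (contDiff_pd (contDiff_pd hW j) j).continuous
  have contU1 : ∀ j : Fin 2, Continuous (fun x => u₁ t x j) :=
    fun j => (contDiff_comp (contDiff_slice_vec hu₁ t) j).continuous
  have contU2 : ∀ j : Fin 2, Continuous (fun x => u₂ t x j) :=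
    fun j => (contDiff_comp (contDiff_slice_vec hu₂ t) j).continuous
  have contω₂ : Continuous (vort (u₂ t)) := hω₂.continuous
  have contPdω₂ : ∀ j : Fin 2, Continuous (pd j (vort (u₂ t))) :=
    fun j => (contDiff_pd hω₂ j).continuous
  have hcont_dt : Continuous
      (fun x : Pt => deriv (fun s => vortJ u₁ (s, x) - vortJ u₂ (s, x)) t) := by
    have e : (fun x : Pt => deriv (fun s => vortJ u₁ (s, x) - vortJ u₂ (s, x)) t)
        = fun x => fderiv ℝ (fun q : ℝ × Pt => vortJ u₁ q - vortJ u₂ q) (t, x)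
          ((1:ℝ), (0:Pt)) :=
      funext fun x => deriv_comp_left hWJ t x
    rw [e]
    exact ((contDiff_fderiv_apply_const hWJ _).comp
      (contDiff_const.prodMk contDiff_id)).continuous
  -- integration by parts identities
  have ibp1 : (∫ x in D.Ω, (vort (u₁ t) x - vort (u₂ t) x)
      * (∑ j, u₁ t x j * pd j (fun y => vort (u₁ t) y - vort (u₂ t) y) x)) = 0 := by
    have hc : ContDiff ℝ (⊤ : ℕ∞) (fun y => (vort (u₁ t) y - vort (u₂ t) y)
        * (vort (u₁ t) y - vort (u₂ t) y)) := hW.mul hW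
    have hthm := div_smul_thm D hc (contDiff_slice_vec hu₁ t)
    have hbd : (∫ x in frontier D.Ω, ((vort (u₁ t) x - vort (u₂ t) x)
        * (vort (u₁ t) x - vort (u₂ t) x) * ∑ j, u₁ t x j * D.n x j) ∂D.σ) = 0 := by
      rw [setIntegral_congr_fun hfmeas (g := fun _ => (0:ℝ))
        (fun x hx => by simp [hsol₁.slip t ht x hx])]
      simp
    have h2 : (∫ x in D.Ω, 2 * ((vort (u₁ t) x - vort (u₂ t) x)
        * (∑ j, u₁ t x j * pd j (fun y => vort (u₁ t) y - vort (u₂ t) y) x))) = 0 := by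
      have hpt : ∀ x ∈ D.Ω, 2 * ((vort (u₁ t) x - vort (u₂ t) x)
          * (∑ j, u₁ t x j * pd j (fun y => vort (u₁ t) y - vort (u₂ t) y) x))
          = (∑ j, pd j (fun y => (vort (u₁ t) y - vort (u₂ t) y)
              * (vort (u₁ t) y - vort (u₂ t) y)) x * u₁ t x j)
            + (vort (u₁ t) x - vort (u₂ t) x) * (vort (u₁ t) x - vort (u₂ t) x)
              * div2 (u₁ t) x := by
        intro x hx
        rw [hdiv1 x hx]
        simp only [Fin.sum_univ_two,
          pd_mul (hW.differentiable (by simp) x) (hW.differentiable (by simp) x) 0,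
          pd_mul (hW.differentiable (by simp) x) (hW.differentiable (by simp) x) 1]
        ring
      calc (∫ x in D.Ω, 2 * ((vort (u₁ t) x - vort (u₂ t) x)
          * (∑ j, u₁ t x j * pd j (fun y => vort (u₁ t) y - vort (u₂ t) y) x)))
          = ∫ x in D.Ω, ((∑ j, pd j (fun y => (vort (u₁ t) y - vort (u₂ t) y)
              * (vort (u₁ t) y - vort (u₂ t) y)) x * u₁ t x j)
            + (vort (u₁ t) x - vort (u₂ t) x) * (vort (u₁ t) x - vort (u₂ t) x)
              * div2 (u₁ t) x) := setIntegral_congr_fun hmeas hpt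
        _ = 0 := hthm.trans hbd
    rw [integral_const_mul] at h2
    linarith
  have ibp2 : (∫ x in D.Ω, (∑ j, (u₁ t x j - u₂ t x j) * pd j (vort (u₂ t)) x)) = 0 := by
    have hthm := div_smul_thm D hω₂ hv
    have hbd : (∫ x in frontier D.Ω,
        (vort (u₂ t) x * ∑ j, (u₁ t x - u₂ t x) j * D.n x j) ∂D.σ) = 0 := by
      rw [setIntegral_congr_fun hfmeas (g := fun _ => (0:ℝ))
        (fun x hx => by have h := hslipv x hx; simp at h; simp [h])]
      simp
    have hpt : ∀ x ∈ D.Ω, (∑ j, (u₁ t x j - u₂ t x j) * pd j (vort (u₂ t)) x)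
        = (∑ j, pd j (vort (u₂ t)) x * (u₁ t x - u₂ t x) j)
          + vort (u₂ t) x * div2 (fun y => u₁ t y - u₂ t y) x := by
      intro x hx
      rw [hdivv x hx]
      simp only [Fin.sum_univ_two, hvcomp]
      ring
    calc (∫ x in D.Ω, (∑ j, (u₁ t x j - u₂ t x j) * pd j (vort (u₂ t)) x))
        = ∫ x in D.Ω, ((∑ j, pd j (vort (u₂ t)) x * (u₁ t x - u₂ t x) j)
          + vort (u₂ t) x * div2 (fun y => u₁ t y - u₂ t y) x) :=
          setIntegral_congr_fun hmeas hpt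
      _ = 0 := hthm.trans hbd
  have ibp3 : (∫ x in D.Ω,
      (∑ j, u₁ t x j * pd j (fun y => vort (u₁ t) y - vort (u₂ t) y) x)) = 0 := by
    have hthm := div_smul_thm D hW (contDiff_slice_vec hu₁ t)
    have hbd : (∫ x in frontier D.Ω, ((vort (u₁ t) x - vort (u₂ t) x)
        * ∑ j, u₁ t x j * D.n x j) ∂D.σ) = 0 := by
      rw [setIntegral_congr_fun hfmeas (g := fun _ => (0:ℝ))
        (fun x hx => by simp [hsol₁.slip t ht x hx])]
      simp
    have hpt : ∀ x ∈ D.Ω,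
        (∑ j, u₁ t x j * pd j (fun y => vort (u₁ t) y - vort (u₂ t) y) x)
        = (∑ j, pd j (fun y => vort (u₁ t) y - vort (u₂ t) y) x * u₁ t x j)
          + (vort (u₁ t) x - vort (u₂ t) x) * div2 (u₁ t) x := by
      intro x hx
      rw [hdiv1 x hx]
      simp only [Fin.sum_univ_two]
      ring
    calc (∫ x in D.Ω,
        (∑ j, u₁ t x j * pd j (fun y => vort (u₁ t) y - vort (u₂ t) y) x))
        = ∫ x in D.Ω, ((∑ j, pd j (fun y => vort (u₁ t) y - vort (u₂ t) y) x * u₁ t x j)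
          + (vort (u₁ t) x - vort (u₂ t) x) * div2 (u₁ t) x) :=
          setIntegral_congr_fun hmeas hpt
      _ = 0 := hthm.trans hbd
  have hlapzero : (∫ x in D.Ω,
      (∑ j, pd j (pd j (fun y => vort (u₁ t) y - vort (u₂ t) y)) x)) = 0 := by
    have hpt : ∀ x ∈ D.Ω, (∑ j, pd j (pd j (fun y => vort (u₁ t) y - vort (u₂ t) y)) x)
        = deriv (fun s => vortJ u₁ (s, x) - vortJ u₂ (s, x)) t
          + ((∑ j, u₁ t x j * pd j (fun y => vort (u₁ t) y - vort (u₂ t) y) x)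
            + (∑ j, (u₁ t x j - u₂ t x j) * pd j (vort (u₂ t)) x)) := by
      intro x hx
      rw [hdtW x hx]
      ring
    rw [setIntegral_congr_fun hmeas hpt]
    have i1 : IntegrableOn
        (fun x : Pt => deriv (fun s => vortJ u₁ (s, x) - vortJ u₂ (s, x)) t) D.Ω :=
      integrableOn_of_continuous hb hcont_dt
    have i2 : IntegrableOn (fun x : Pt =>
        ∑ j, u₁ t x j * pd j (fun y => vort (u₁ t) y - vort (u₂ t) y) x) D.Ω :=
      integrableOn_of_continuous hb
        (continuous_finset_sum _ fun j _ => (contU1 j).mul (contPdW j))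
    have i3 : IntegrableOn (fun x : Pt =>
        ∑ j, (u₁ t x j - u₂ t x j) * pd j (vort (u₂ t)) x) D.Ω :=
      integrableOn_of_continuous hb
        (continuous_finset_sum _ fun j _ => ((contU1 j).sub (contU2 j)).mul (contPdω₂ j))
    have i23 : IntegrableOn (fun x : Pt =>
        (∑ j, u₁ t x j * pd j (fun y => vort (u₁ t) y - vort (u₂ t) y) x)
        + (∑ j, (u₁ t x j - u₂ t x j) * pd j (vort (u₂ t)) x)) D.Ω := i2.add i3
    rw [integral_add i1 i23, integral_add i2 i3, hIdt, ibp3, ibp2]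
    ring
  have ibp5 : (∫ x in D.Ω, (vort (u₁ t) x - vort (u₂ t) x)
        * (∑ j, pd j (pd j (fun y => vort (u₁ t) y - vort (u₂ t) y)) x))
      = - ∫ x in D.Ω, gradSq (fun y => vort (u₁ t) y - vort (u₂ t) y) x := by
    have hgradW : ContDiff ℝ (⊤ : ℕ∞) (mkVec (pd 0 (fun y => vort (u₁ t) y - vort (u₂ t) y)) (pd 1 (fun y => vort (u₁ t) y - vort (u₂ t) y))) :=
      contDiff_mkVec (contDiff_pd hW 0) (contDiff_pd hW 1)
    have hdivgrad : ∀ x : Pt, div2 (mkVec (pd 0 (fun y => vort (u₁ t) y - vort (u₂ t) y)) (pd 1 (fun y => vort (u₁ t) y - vort (u₂ t) y))) x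
        = pd 0 (pd 0 (fun y => vort (u₁ t) y - vort (u₂ t) y)) x + pd 1 (pd 1 (fun y => vort (u₁ t) y - vort (u₂ t) y)) x := fun x => rfl
    have hthm := div_smul_thm D hW hgradW
    have hbd2 : (∫ x in frontier D.Ω,
        (∑ j, (mkVec (pd 0 (fun y => vort (u₁ t) y - vort (u₂ t) y)) (pd 1 (fun y => vort (u₁ t) y - vort (u₂ t) y))) x j * D.n x j) ∂D.σ) = 0 := by
      rw [← D.divergence_thm _ hgradW]
      have hpt2 : ∀ x ∈ D.Ω, div2 (mkVec (pd 0 (fun y => vort (u₁ t) y - vort (u₂ t) y)) (pd 1 (fun y => vort (u₁ t) y - vort (u₂ t) y))) x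
          = (∑ j, pd j (pd j (fun y => vort (u₁ t) y - vort (u₂ t) y)) x) := by
        intro x _
        rw [hdivgrad x]
        simp [Fin.sum_univ_two]
      rw [setIntegral_congr_fun hmeas hpt2]
      exact hlapzero
    have hbd : (∫ x in frontier D.Ω, ((vort (u₁ t) x - vort (u₂ t) x)
        * ∑ j, (mkVec (pd 0 (fun y => vort (u₁ t) y - vort (u₂ t) y)) (pd 1 (fun y => vort (u₁ t) y - vort (u₂ t) y))) x j * D.n x j) ∂D.σ) = 0 := by
      have heq : Set.EqOn
          (fun x => (vort (u₁ t) x - vort (u₂ t) x) * ∑ j, (mkVec (pd 0 (fun y => vort (u₁ t) y - vort (u₂ t) y)) (pd 1 (fun y => vort (u₁ t) y - vort (u₂ t) y))) x j * D.n x j)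
          (fun x => (h₁ t - h₂ t) * ∑ j, (mkVec (pd 0 (fun y => vort (u₁ t) y - vort (u₂ t) y)) (pd 1 (fun y => vort (u₁ t) y - vort (u₂ t) y))) x j * D.n x j) (frontier D.Ω) := by
        intro x hx
        simp only [hsol₁.vortBC t ht x hx, hsol₂.vortBC t ht x hx]
      rw [setIntegral_congr_fun hfmeas heq, integral_const_mul, hbd2, mul_zero]
    have contGradSq : Continuous (gradSq (fun y => vort (u₁ t) y - vort (u₂ t) y)) := by
      show Continuous fun x => ∑ i : Fin 2, pd i (fun y => vort (u₁ t) y - vort (u₂ t) y) x ^ 2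
      exact continuous_finset_sum _ fun i _ => (contPdW i).pow 2
    have hkey : (∫ x in D.Ω, (gradSq (fun y => vort (u₁ t) y - vort (u₂ t) y) x
        + (vort (u₁ t) x - vort (u₂ t) x)
          * (∑ j, pd j (pd j (fun y => vort (u₁ t) y - vort (u₂ t) y)) x))) = 0 := by
      have hpt : ∀ x ∈ D.Ω, (gradSq (fun y => vort (u₁ t) y - vort (u₂ t) y) x
          + (vort (u₁ t) x - vort (u₂ t) x) * (∑ j, pd j (pd j (fun y => vort (u₁ t) y - vort (u₂ t) y)) x))
          = (∑ j, pd j (fun y => vort (u₁ t) y - vort (u₂ t) y) x * (mkVec (pd 0 (fun y => vort (u₁ t) y - vort (u₂ t) y)) (pd 1 (fun y => vort (u₁ t) y - vort (u₂ t) y))) x j)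
            + (vort (u₁ t) x - vort (u₂ t) x) * div2 (mkVec (pd 0 (fun y => vort (u₁ t) y - vort (u₂ t) y)) (pd 1 (fun y => vort (u₁ t) y - vort (u₂ t) y))) x := by
        intro x _
        rw [hdivgrad x]
        simp only [Fin.sum_univ_two, mkVec_apply₀, mkVec_apply₁, gradSq]
        ring
      exact (setIntegral_congr_fun hmeas hpt).trans (hthm.trans hbd)
    have ig : IntegrableOn (fun x => gradSq (fun y => vort (u₁ t) y - vort (u₂ t) y) x) D.Ω :=
      integrableOn_of_continuous hb contGradSq
    have iwd : IntegrableOn (fun x => (vort (u₁ t) x - vort (u₂ t) x)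
        * (∑ j, pd j (pd j (fun y => vort (u₁ t) y - vort (u₂ t) y)) x)) D.Ω :=
      integrableOn_of_continuous hb (contW.mul
        (continuous_finset_sum _ fun j _ => contPd2W j))
    rw [integral_add ig iwd] at hkey
    linarith
  have ibp6 : (∫ x in D.Ω, (vort (u₁ t) x - vort (u₂ t) x)
        * (∑ j, (u₁ t x j - u₂ t x j) * pd j (vort (u₂ t)) x))
      = - ∫ x in D.Ω, vort (u₂ t) x
          * (∑ j, (u₁ t x j - u₂ t x j)
            * pd j (fun y => vort (u₁ t) y - vort (u₂ t) y) x) := by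
    have hc : ContDiff ℝ (⊤ : ℕ∞) (fun y => (vort (u₁ t) y - vort (u₂ t) y) * vort (u₂ t) y) :=
      hW.mul hω₂
    have hthm := div_smul_thm D hc hv
    have hbd : (∫ x in frontier D.Ω, ((vort (u₁ t) x - vort (u₂ t) x) * vort (u₂ t) x
        * ∑ j, (u₁ t x - u₂ t x) j * D.n x j) ∂D.σ) = 0 := by
      rw [setIntegral_congr_fun hfmeas (g := fun _ => (0:ℝ))
        (fun x hx => by have h := hslipv x hx; simp at h; simp [h])]
      simp
    have hpt : ∀ x ∈ D.Ω,
        (vort (u₂ t) x * (∑ j, (u₁ t x j - u₂ t x j) * pd j (fun y => vort (u₁ t) y - vort (u₂ t) y) x))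
        + ((vort (u₁ t) x - vort (u₂ t) x)
            * (∑ j, (u₁ t x j - u₂ t x j) * pd j (vort (u₂ t)) x))
        = (∑ j, pd j (fun y => (vort (u₁ t) y - vort (u₂ t) y) * vort (u₂ t) y) x
            * (u₁ t x - u₂ t x) j)
          + (vort (u₁ t) x - vort (u₂ t) x) * vort (u₂ t) x
            * div2 (fun y => u₁ t y - u₂ t y) x := by
      intro x hx
      rw [hdivv x hx]
      simp only [Fin.sum_univ_two, hvcomp,
        pd_mul (hW.differentiable (by simp) x) (hω₂.differentiable (by simp) x) 0,
        pd_mul (hW.differentiable (by simp) x) (hω₂.differentiable (by simp) x) 1]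
      ring
    have hkey : (∫ x in D.Ω,
        ((vort (u₂ t) x * (∑ j, (u₁ t x j - u₂ t x j) * pd j (fun y => vort (u₁ t) y - vort (u₂ t) y) x))
        + ((vort (u₁ t) x - vort (u₂ t) x)
            * (∑ j, (u₁ t x j - u₂ t x j) * pd j (vort (u₂ t)) x)))) = 0 :=
      (setIntegral_congr_fun hmeas hpt).trans (hthm.trans hbd)
    have ia : IntegrableOn (fun x => vort (u₂ t) x
        * (∑ j, (u₁ t x j - u₂ t x j) * pd j (fun y => vort (u₁ t) y - vort (u₂ t) y) x)) D.Ω :=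
      integrableOn_of_continuous hb (contω₂.mul (continuous_finset_sum _ fun j _ =>
        ((contU1 j).sub (contU2 j)).mul (contPdW j)))
    have ib : IntegrableOn (fun x => (vort (u₁ t) x - vort (u₂ t) x)
        * (∑ j, (u₁ t x j - u₂ t x j) * pd j (vort (u₂ t)) x)) D.Ω :=
      integrableOn_of_continuous hb (contW.mul (continuous_finset_sum _ fun j _ =>
        ((contU1 j).sub (contU2 j)).mul (contPdω₂ j)))
    rw [integral_add ia ib] at hkey
    linarith
  -- energy identity
  have hE' : deriv (fun s => ∫ x in D.Ω, (vort (u₁ s) x - vort (u₂ s) x) ^ 2) t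
      = -2 * (∫ x in D.Ω, gradSq (fun y => vort (u₁ t) y - vort (u₂ t) y) x)
        + 2 * ∫ x in D.Ω, vort (u₂ t) x
          * (∑ j, (u₁ t x j - u₂ t x j)
            * pd j (fun y => vort (u₁ t) y - vort (u₂ t) y) x) := by
    rw [hE]
    have hpt : ∀ x ∈ D.Ω, 2 * (vort (u₁ t) x - vort (u₂ t) x)
          * deriv (fun s => vortJ u₁ (s, x) - vortJ u₂ (s, x)) t
        = 2 * ((vort (u₁ t) x - vort (u₂ t) x)
            * (∑ j, pd j (pd j (fun y => vort (u₁ t) y - vort (u₂ t) y)) x))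
          - 2 * ((vort (u₁ t) x - vort (u₂ t) x)
            * (∑ j, u₁ t x j * pd j (fun y => vort (u₁ t) y - vort (u₂ t) y) x))
          - 2 * ((vort (u₁ t) x - vort (u₂ t) x)
            * (∑ j, (u₁ t x j - u₂ t x j) * pd j (vort (u₂ t)) x)) := by
      intro x hx; rw [hdtW x hx]; ring
    rw [setIntegral_congr_fun hmeas hpt]
    have iA : IntegrableOn (fun x => 2 * ((vort (u₁ t) x - vort (u₂ t) x)
        * (∑ j, pd j (pd j (fun y => vort (u₁ t) y - vort (u₂ t) y)) x))) D.Ω :=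
      integrableOn_of_continuous hb (continuous_const.mul (contW.mul
        (continuous_finset_sum _ fun j _ => contPd2W j)))
    have iB : IntegrableOn (fun x => 2 * ((vort (u₁ t) x - vort (u₂ t) x)
        * (∑ j, u₁ t x j * pd j (fun y => vort (u₁ t) y - vort (u₂ t) y) x))) D.Ω :=
      integrableOn_of_continuous hb (continuous_const.mul (contW.mul
        (continuous_finset_sum _ fun j _ => (contU1 j).mul (contPdW j))))
    have iC : IntegrableOn (fun x => 2 * ((vort (u₁ t) x - vort (u₂ t) x)
        * (∑ j, (u₁ t x j - u₂ t x j) * pd j (vort (u₂ t)) x))) D.Ω :=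
      integrableOn_of_continuous hb (continuous_const.mul (contW.mul
        (continuous_finset_sum _ fun j _ => ((contU1 j).sub (contU2 j)).mul (contPdω₂ j))))
    have iAB : IntegrableOn (fun x => 2 * ((vort (u₁ t) x - vort (u₂ t) x)
        * (∑ j, pd j (pd j (fun y => vort (u₁ t) y - vort (u₂ t) y)) x))
        - 2 * ((vort (u₁ t) x - vort (u₂ t) x)
        * (∑ j, u₁ t x j * pd j (fun y => vort (u₁ t) y - vort (u₂ t) y) x))) D.Ω := iA.sub iB
    rw [integral_sub iAB iC, integral_sub iA iB, integral_const_mul, integral_const_mul,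
      integral_const_mul, ibp1, ibp5, ibp6]
    ring
  -- nonnegativity and continuity for the Hölder step
  have hvec0 : ∀ x : Pt, 0 ≤ vecSq (fun y => u₁ t y - u₂ t y) x :=
    fun x => Finset.sum_nonneg fun i _ => sq_nonneg _
  have hgrad0 : ∀ x : Pt, 0 ≤ gradSq (fun y => vort (u₁ t) y - vort (u₂ t) y) x :=
    fun x => Finset.sum_nonneg fun i _ => sq_nonneg _
  have contVec : Continuous (vecSq (fun y => u₁ t y - u₂ t y)) := by
    show Continuous fun x => ∑ i : Fin 2, (fun y => u₁ t y - u₂ t y) x i ^ 2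
    exact continuous_finset_sum _ fun i _ => ((contU1 i).sub (contU2 i)).pow 2
  have contGrad : Continuous (gradSq (fun y => vort (u₁ t) y - vort (u₂ t) y)) := by
    show Continuous fun x => ∑ i : Fin 2, pd i (fun y => vort (u₁ t) y - vort (u₂ t) y) x ^ 2
    exact continuous_finset_sum _ fun i _ => (contPdW i).pow 2
  have hR0 : (0:ℝ) ≤ ∫ x in D.Ω, vort (u₂ t) x ^ 4 :=
    setIntegral_nonneg hmeas fun x _ => by positivity
  have hS0 : (0:ℝ) ≤ ∫ x in D.Ω, vecSq (fun y => u₁ t y - u₂ t y) x ^ 2 :=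
    setIntegral_nonneg hmeas fun x _ => by positivity
  have hP0 : (0:ℝ) ≤ ∫ x in D.Ω, gradSq (fun y => vort (u₁ t) y - vort (u₂ t) y) x :=
    setIntegral_nonneg hmeas fun x _ => hgrad0 x
  have hQ0 : (0:ℝ) ≤ ∫ x in D.Ω, (vort (u₁ t) x - vort (u₂ t) x) ^ 2 :=
    setIntegral_nonneg hmeas fun x _ => sq_nonneg _
  -- Hölder estimate
  have hholder : (∫ x in D.Ω, vort (u₂ t) x
        * (∑ j, (u₁ t x j - u₂ t x j)
          * pd j (fun y => vort (u₁ t) y - vort (u₂ t) y) x))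
      ≤ (∫ x in D.Ω, vort (u₂ t) x ^ 4) ^ (1/4 : ℝ)
        * (∫ x in D.Ω, vecSq (fun y => u₁ t y - u₂ t y) x ^ 2) ^ (1/4 : ℝ)
        * (∫ x in D.Ω, gradSq (fun y => vort (u₁ t) y - vort (u₂ t) y) x) ^ (1/2 : ℝ) := by
    have hptCS : ∀ x : Pt, vort (u₂ t) x * (∑ j, (u₁ t x j - u₂ t x j)
          * pd j (fun y => vort (u₁ t) y - vort (u₂ t) y) x)
        ≤ (|vort (u₂ t) x| * Real.sqrt (vecSq (fun y => u₁ t y - u₂ t y) x))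
          * Real.sqrt (gradSq (fun y => vort (u₁ t) y - vort (u₂ t) y) x) := by
      intro x
      have e1 : vecSq (fun y => u₁ t y - u₂ t y) x
          = (u₁ t x 0 - u₂ t x 0) ^ 2 + (u₁ t x 1 - u₂ t x 1) ^ 2 := by
        show ∑ i : Fin 2, (fun y => u₁ t y - u₂ t y) x i ^ 2 = _
        simp only [Fin.sum_univ_two, hvcomp]
      have e2 : gradSq (fun y => vort (u₁ t) y - vort (u₂ t) y) x = pd 0 (fun y => vort (u₁ t) y - vort (u₂ t) y) x ^ 2 + pd 1 (fun y => vort (u₁ t) y - vort (u₂ t) y) x ^ 2 := by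
        show ∑ i : Fin 2, pd i (fun y => vort (u₁ t) y - vort (u₂ t) y) x ^ 2 = _
        simp only [Fin.sum_univ_two]
      have h1 : (∑ j, (u₁ t x j - u₂ t x j) * pd j (fun y => vort (u₁ t) y - vort (u₂ t) y) x) ^ 2
          ≤ vecSq (fun y => u₁ t y - u₂ t y) x * gradSq (fun y => vort (u₁ t) y - vort (u₂ t) y) x := by
        rw [e1, e2]
        simp only [Fin.sum_univ_two]
        nlinarith [sq_nonneg ((u₁ t x 0 - u₂ t x 0) * pd 1 (fun y => vort (u₁ t) y - vort (u₂ t) y) x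
          - (u₁ t x 1 - u₂ t x 1) * pd 0 (fun y => vort (u₁ t) y - vort (u₂ t) y) x)]
      calc vort (u₂ t) x * (∑ j, (u₁ t x j - u₂ t x j) * pd j (fun y => vort (u₁ t) y - vort (u₂ t) y) x)
          ≤ |vort (u₂ t) x * (∑ j, (u₁ t x j - u₂ t x j) * pd j (fun y => vort (u₁ t) y - vort (u₂ t) y) x)| := le_abs_self _
        _ = |vort (u₂ t) x| * |(∑ j, (u₁ t x j - u₂ t x j) * pd j (fun y => vort (u₁ t) y - vort (u₂ t) y) x)| := abs_mul _ _
        _ ≤ |vort (u₂ t) x| * Real.sqrt (vecSq (fun y => u₁ t y - u₂ t y) x * gradSq (fun y => vort (u₁ t) y - vort (u₂ t) y) x) := by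
            apply mul_le_mul_of_nonneg_left _ (abs_nonneg _)
            rw [← Real.sqrt_sq_eq_abs]
            exact Real.sqrt_le_sqrt h1
        _ = (|vort (u₂ t) x| * Real.sqrt (vecSq (fun y => u₁ t y - u₂ t y) x)) * Real.sqrt (gradSq (fun y => vort (u₁ t) y - vort (u₂ t) y) x) := by
            rw [Real.sqrt_mul (hvec0 x), mul_assoc]
    have contf1 : Continuous (fun x => |vort (u₂ t) x| * Real.sqrt (vecSq (fun y => u₁ t y - u₂ t y) x)) :=
      (contω₂.abs).mul (contVec.sqrt)
    have step1 : (∫ x in D.Ω, vort (u₂ t) x * (∑ j, (u₁ t x j - u₂ t x j)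
          * pd j (fun y => vort (u₁ t) y - vort (u₂ t) y) x))
        ≤ ∫ x in D.Ω, (|vort (u₂ t) x| * Real.sqrt (vecSq (fun y => u₁ t y - u₂ t y) x))
            * Real.sqrt (gradSq (fun y => vort (u₁ t) y - vort (u₂ t) y) x) :=
      setIntegral_mono_on
        (integrableOn_of_continuous hb (contω₂.mul (continuous_finset_sum _ fun j _ =>
          ((contU1 j).sub (contU2 j)).mul (contPdW j))))
        (integrableOn_of_continuous hb (contf1.mul contGrad.sqrt))
        hmeas (fun x _ => hptCS x)
    have step2 := setIntegral_cs hmeas hb contf1 contGrad.sqrt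
      (fun x => mul_nonneg (abs_nonneg _) (Real.sqrt_nonneg _))
      (fun x => Real.sqrt_nonneg _)
    have e2 : (∫ x in D.Ω, Real.sqrt (gradSq (fun y => vort (u₁ t) y - vort (u₂ t) y) x) ^ 2)
        = ∫ x in D.Ω, gradSq (fun y => vort (u₁ t) y - vort (u₂ t) y) x :=
      integral_congr_ae (Filter.Eventually.of_forall fun x => Real.sq_sqrt (hgrad0 x))
    have e3 : (∫ x in D.Ω, (|vort (u₂ t) x| * Real.sqrt (vecSq (fun y => u₁ t y - u₂ t y) x)) ^ 2)
        = ∫ x in D.Ω, vort (u₂ t) x ^ 2 * vecSq (fun y => u₁ t y - u₂ t y) x :=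
      integral_congr_ae (Filter.Eventually.of_forall fun x => by
        show (|vort (u₂ t) x| * Real.sqrt (vecSq (fun y => u₁ t y - u₂ t y) x)) ^ 2
          = vort (u₂ t) x ^ 2 * vecSq (fun y => u₁ t y - u₂ t y) x
        rw [mul_pow, sq_abs, Real.sq_sqrt (hvec0 x)])
    have step3 := setIntegral_cs hmeas hb (f := fun x => vort (u₂ t) x ^ 2) (contω₂.pow 2) contVec
      (fun x => sq_nonneg _) hvec0
    have e4 : (∫ x in D.Ω, (vort (u₂ t) x ^ 2) ^ 2) = ∫ x in D.Ω, vort (u₂ t) x ^ 4 :=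
      integral_congr_ae (Filter.Eventually.of_forall fun x => by ring)
    rw [e4] at step3
    have hM0 : (0:ℝ) ≤ ∫ x in D.Ω, vort (u₂ t) x ^ 2 * vecSq (fun y => u₁ t y - u₂ t y) x :=
      setIntegral_nonneg hmeas fun x _ => mul_nonneg (sq_nonneg _) (hvec0 x)
    have h5 : (∫ x in D.Ω, vort (u₂ t) x ^ 2 * vecSq (fun y => u₁ t y - u₂ t y) x) ^ (1/2:ℝ)
        ≤ (∫ x in D.Ω, vort (u₂ t) x ^ 4) ^ (1/4:ℝ)
          * (∫ x in D.Ω, vecSq (fun y => u₁ t y - u₂ t y) x ^ 2) ^ (1/4:ℝ) := by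
      have hmono := Real.rpow_le_rpow hM0 step3 (by norm_num : (0:ℝ) ≤ 1/2)
      calc (∫ x in D.Ω, vort (u₂ t) x ^ 2 * vecSq (fun y => u₁ t y - u₂ t y) x) ^ (1/2:ℝ)
          ≤ ((∫ x in D.Ω, vort (u₂ t) x ^ 4) ^ (1/2:ℝ)
            * (∫ x in D.Ω, vecSq (fun y => u₁ t y - u₂ t y) x ^ 2) ^ (1/2:ℝ)) ^ (1/2:ℝ) := hmono
        _ = (∫ x in D.Ω, vort (u₂ t) x ^ 4) ^ (1/4:ℝ)
            * (∫ x in D.Ω, vecSq (fun y => u₁ t y - u₂ t y) x ^ 2) ^ (1/4:ℝ) := by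
            rw [Real.mul_rpow (Real.rpow_nonneg hR0 _) (Real.rpow_nonneg hS0 _),
              ← Real.rpow_mul hR0, ← Real.rpow_mul hS0]
            norm_num
    calc (∫ x in D.Ω, vort (u₂ t) x * (∑ j, (u₁ t x j - u₂ t x j)
          * pd j (fun y => vort (u₁ t) y - vort (u₂ t) y) x))
        ≤ ∫ x in D.Ω, (|vort (u₂ t) x| * Real.sqrt (vecSq (fun y => u₁ t y - u₂ t y) x))
            * Real.sqrt (gradSq (fun y => vort (u₁ t) y - vort (u₂ t) y) x) := step1
      _ ≤ (∫ x in D.Ω, (|vort (u₂ t) x| * Real.sqrt (vecSq (fun y => u₁ t y - u₂ t y) x)) ^ 2) ^ (1/2:ℝ)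
          * (∫ x in D.Ω, Real.sqrt (gradSq (fun y => vort (u₁ t) y - vort (u₂ t) y) x) ^ 2) ^ (1/2:ℝ) := step2
      _ = (∫ x in D.Ω, vort (u₂ t) x ^ 2 * vecSq (fun y => u₁ t y - u₂ t y) x) ^ (1/2:ℝ)
          * (∫ x in D.Ω, gradSq (fun y => vort (u₁ t) y - vort (u₂ t) y) x) ^ (1/2:ℝ) := by rw [e3, e2]
      _ ≤ ((∫ x in D.Ω, vort (u₂ t) x ^ 4) ^ (1/4:ℝ)
            * (∫ x in D.Ω, vecSq (fun y => u₁ t y - u₂ t y) x ^ 2) ^ (1/4:ℝ))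
          * (∫ x in D.Ω, gradSq (fun y => vort (u₁ t) y - vort (u₂ t) y) x) ^ (1/2:ℝ) :=
          mul_le_mul_of_nonneg_right h5 (Real.rpow_nonneg hP0 _)
      _ = _ := by ring
  -- the functional-analytic estimate
  have hfa : (∫ x in D.Ω, vecSq (fun y => u₁ t y - u₂ t y) x ^ 2) ^ (1/4 : ℝ)
      ≤ C₁ * (∫ x in D.Ω, (vort (u₁ t) x - vort (u₂ t) x) ^ 2) ^ (1/2 : ℝ) := by
    have h := hest (fun y => u₁ t y - u₂ t y) hv hdivv hslipv
    rw [hvortv] at h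
    simpa [L2] using h
  -- final arithmetic
  have hI : (∫ x in D.Ω, vort (u₂ t) x
        * (∑ j, (u₁ t x j - u₂ t x j) * pd j (fun y => vort (u₁ t) y - vort (u₂ t) y) x))
      ≤ ((∫ x in D.Ω, vort (u₂ t) x ^ 4) ^ (1/4:ℝ)
          * (C₁ * (∫ x in D.Ω, (vort (u₁ t) x - vort (u₂ t) x) ^ 2) ^ (1/2:ℝ)))
        * (∫ x in D.Ω, gradSq (fun y => vort (u₁ t) y - vort (u₂ t) y) x) ^ (1/2:ℝ) := by
    refine hholder.trans ?_
    apply mul_le_mul_of_nonneg_right _ (Real.rpow_nonneg hP0 _)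
    exact mul_le_mul_of_nonneg_left hfa (Real.rpow_nonneg hR0 _)
  have hyoung : 2 * (((∫ x in D.Ω, vort (u₂ t) x ^ 4) ^ (1/4:ℝ)
          * (C₁ * (∫ x in D.Ω, (vort (u₁ t) x - vort (u₂ t) x) ^ 2) ^ (1/2:ℝ)))
        * (∫ x in D.Ω, gradSq (fun y => vort (u₁ t) y - vort (u₂ t) y) x) ^ (1/2:ℝ))
      ≤ C₁ ^ 2 * ((∫ x in D.Ω, vort (u₂ t) x ^ 4) ^ (1/4:ℝ)) ^ 2
          * (∫ x in D.Ω, (vort (u₁ t) x - vort (u₂ t) x) ^ 2)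
        + (∫ x in D.Ω, gradSq (fun y => vort (u₁ t) y - vort (u₂ t) y) x) := by
    exact young_aux hQ0 hP0
  have hL4 : L4 D.Ω (vort (u₂ t)) = (∫ x in D.Ω, vort (u₂ t) x ^ 4) ^ (1/4:ℝ) := rfl
  rw [hE', hL4]
  linarith [hI, hyoung]
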